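/- Let ξ₁, ξ₂, ξ₃ be i.i.d. uniformly random points on the unit circle S¹ ⊂ ℝ². Then for all 0 ≤ t ≤ π, ℙ(area of the triangle [ξ₁,ξ₂,ξ₃] ≤ t) ≥ (2t)^{2/3}/π^{8/3}. -/

import Mathlib

open MeasureTheory Metric Real
open Set
open scoped RealInnerProductSpace ENNReal

noncomputable section

abbrev E2 := EuclideanSpace ℝ (Fin 2)

def vec2 (a b : ℝ) : E2 := (WithLp.equiv 2 (Fin 2 → ℝ)).symm ![a, b]

@[simp] lemma vec2_apply0 (a b : ℝ) : vec2 a b 0 = a := rfl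
@[simp] lemma vec2_apply1 (a b : ℝ) : vec2 a b 1 = b := rfl

lemma inner_eq (p q : E2) : ⟪p, q⟫ = p 0 * q 0 + p 1 * q 1 := by
  simp [PiLp.inner_apply, Fin.sum_univ_two, RCLike.inner_apply, mul_comm]

lemma normsq_eq (p : E2) : p 0 ^ 2 + p 1 ^ 2 = ‖p‖ ^ 2 := by
  rw [← real_inner_self_eq_norm_sq, inner_eq]; ring

def curve (θ : ℝ) : E2 := vec2 (Real.cos θ) (Real.sin θ)

lemma norm_curve (θ : ℝ) : ‖curve θ‖ = 1 := by
  have h := (normsq_eq (curve θ)).symm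
  simp only [curve, vec2_apply0, vec2_apply1, Real.sin_sq_add_cos_sq] at h
  rw [show Real.cos θ ^ 2 + Real.sin θ ^2 = 1 by rw [Real.cos_sq_add_sin_sq]] at h
  have : ‖curve θ‖ ^ 2 = 1 := h
  nlinarith [norm_nonneg (curve θ)]

lemma dist_eq2 (p q : E2) : dist p q = Real.sqrt ((p 0 - q 0)^2 + (p 1 - q 1)^2) := by
  rw [EuclideanSpace.dist_eq]; congr 1; rw [Fin.sum_univ_two]
  simp [Real.dist_eq, sq_abs]

lemma lipschitz_curve : LipschitzWith 1 curve := by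
  apply LipschitzWith.of_dist_le_mul
  intro x y
  rw [dist_eq2]
  simp only [curve, vec2_apply0, vec2_apply1, NNReal.coe_one, one_mul]
  have key : (Real.cos x - Real.cos y)^2 + (Real.sin x - Real.sin y)^2 = 2 - 2 * Real.cos (x - y) := by
    rw [Real.cos_sub]; nlinarith [Real.sin_sq_add_cos_sq x, Real.sin_sq_add_cos_sq y]
  rw [key]
  have h1 : 1 - (x-y)^2/2 ≤ Real.cos (x - y) := Real.one_sub_sq_div_two_le_cos
  calc Real.sqrt (2 - 2*Real.cos (x-y)) ≤ Real.sqrt ((x-y)^2) := by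
        apply Real.sqrt_le_sqrt; nlinarith
    _ = |x - y| := Real.sqrt_sq_eq_abs _
    _ = dist x y := (Real.dist_eq x y).symm

lemma curve_ext {p : E2} {θ : ℝ} (h0 : Real.cos θ = p 0) (h1 : Real.sin θ = p 1) :
    curve θ = p := by
  apply PiLp.ext
  intro i
  fin_cases i <;> simp [curve, h0, h1]

lemma mem_sphere_iff (p : E2) : p ∈ sphere (0 : E2) 1 ↔ ‖p‖ = 1 := by
  simp [mem_sphere_iff_norm]

lemma sphere_subset_curve : sphere (0 : E2) 1 ⊆ curve '' (Icc 0 (2*π)) := by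
  intro p hp
  rw [mem_sphere_iff] at hp
  have hsq : p 0 ^ 2 + p 1 ^ 2 = 1 := by rw [normsq_eq, hp]; norm_num
  have h0 : -1 ≤ p 0 := by nlinarith
  have h0' : p 0 ≤ 1 := by nlinarith
  have hcos := Real.cos_arccos h0 h0'
  have hsin : Real.sin (Real.arccos (p 0)) = |p 1| := by
    rw [Real.sin_arccos]
    rw [show 1 - p 0 ^ 2 = p 1 ^2 by nlinarith]
    exact Real.sqrt_sq_eq_abs _
  rcases le_or_gt 0 (p 1) with h1 | h1
  · exact ⟨Real.arccos (p 0), ⟨Real.arccos_nonneg _, le_trans (Real.arccos_le_pi _)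
      (by nlinarith [Real.pi_pos])⟩, curve_ext hcos (by rw [hsin, abs_of_nonneg h1])⟩
  · refine ⟨2*π - Real.arccos (p 0), ⟨by nlinarith [Real.arccos_le_pi (p 0), Real.pi_pos],
      by nlinarith [Real.arccos_nonneg (p 0)]⟩, curve_ext ?_ ?_⟩
    · rw [Real.cos_sub, Real.cos_two_pi, Real.sin_two_pi, hcos]; ring
    · rw [Real.sin_sub, Real.cos_two_pi, Real.sin_two_pi, hsin, abs_of_neg h1]; ring

lemma circle_measure_le : μH[(1:ℝ)] (sphere (0 : E2) 1) ≤ ENNReal.ofReal (2*π) := by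
  calc μH[(1:ℝ)] (sphere (0 : E2) 1) ≤ μH[(1:ℝ)] (curve '' (Icc 0 (2*π))) :=
        measure_mono sphere_subset_curve
    _ ≤ ENNReal.ofReal (2*π) := by
        refine le_trans (lipschitz_curve.hausdorffMeasure_image_le zero_le_one _) ?_
        rw [MeasureTheory.hausdorffMeasure_real]
        simp [Real.volume_Icc]

-- inner with unit vector is 1-lipschitz
lemma lipschitz_inner (u : E2) (hu : ‖u‖ = 1) : LipschitzWith 1 (fun p : E2 => ⟪u, p⟫) := by
  apply LipschitzWith.of_dist_le_mul
  intro x y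
  rw [Real.dist_eq, dist_eq_norm, ← inner_sub_right]
  simpa [hu] using abs_real_inner_le_norm u (x - y)

-- the arc
def arc (q : E2) (α : ℝ) : Set E2 := {p | ‖p‖ = 1 ∧ Real.cos α ≤ ⟪q, p⟫}

lemma isClosed_arc (q : E2) (α : ℝ) : IsClosed (arc q α) := by
  apply IsClosed.inter
  · exact isClosed_eq continuous_norm continuous_const
  · have hc : Continuous fun p : E2 => ⟪q, p⟫ := Continuous.inner continuous_const continuous_id
    exact isClosed_le continuous_const hc

lemma inner_curve_curve (a b : ℝ) : ⟪curve a, curve b⟫ = Real.cos (a - b) := by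
  rw [inner_eq, Real.cos_sub]
  simp only [curve, vec2_apply0, vec2_apply1]

lemma proj_lower {S : Set E2} {u : E2} (hu : ‖u‖ = 1) {A : Set ℝ}
    (h : A ⊆ (fun p => ⟪u, p⟫) '' S) : volume A ≤ μH[(1:ℝ)] S := by
  calc volume A = μH[(1:ℝ)] A := by rw [MeasureTheory.hausdorffMeasure_real]
    _ ≤ μH[(1:ℝ)] ((fun p => ⟪u, p⟫) '' S) := measure_mono h
    _ ≤ _ := by
      refine le_trans ((lipschitz_inner u hu).hausdorffMeasure_image_le zero_le_one S) ?_
      simp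

lemma arc_lower_e0 (α : ℝ) (hα0 : 0 < α) (hα : α ≤ π/2) :
    ENNReal.ofReal (4 * Real.sin (α/2)) ≤ μH[(1:ℝ)] (arc (curve 0) α) := by
  have hπ := Real.pi_pos
  have hs2 : (0:ℝ) ≤ Real.sin (α/2) := Real.sin_nonneg_of_nonneg_of_le_pi (by linarith) (by linarith)
  set S₁ := curve '' Icc 0 α with hS₁
  set S₂ := curve '' Ico (-α) 0 with hS₂
  -- subset of arc
  have hsub : S₂ ∪ S₁ ⊆ arc (curve 0) α := by
    rintro p (⟨θ, hθ, rfl⟩ | ⟨θ, hθ, rfl⟩) <;>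
    · refine ⟨norm_curve θ, ?_⟩
      rw [inner_curve_curve, zero_sub, Real.cos_neg,
        show Real.cos θ = Real.cos |θ| from (Real.cos_abs θ).symm]
      apply Real.cos_le_cos_of_nonneg_of_le_pi (abs_nonneg θ) (by linarith)
      rw [abs_le]
      constructor <;> [skip; skip] <;> rcases hθ with ⟨h1, h2⟩ <;> linarith
  -- disjointness
  have hdisj : Disjoint S₂ S₁ := by
    rw [Set.disjoint_left]
    rintro p ⟨θ₂, hθ₂, rfl⟩ ⟨θ₁, hθ₁, h⟩
    have h1 : Real.sin θ₁ ≥ 0 :=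
      Real.sin_nonneg_of_nonneg_of_le_pi hθ₁.1 (by rcases hθ₁ with ⟨_, h2⟩; linarith)
    have h2 : Real.sin θ₂ < 0 := by
      apply Real.sin_neg_of_neg_of_neg_pi_lt hθ₂.2
      rcases hθ₂ with ⟨h3, _⟩; linarith
    have : Real.sin θ₁ = Real.sin θ₂ := by
      have := congrFun (congrArg (fun p : E2 => (p : Fin 2 → ℝ)) h) 1
      simpa [curve] using this
    linarith [this]
  have hmeas : MeasurableSet S₁ :=
    ((isCompact_Icc.image lipschitz_curve.continuous).isClosed).measurableSet
  -- lower bounds for each piece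
  have hb1 : ENNReal.ofReal (2 * Real.sin (α/2)) ≤ μH[(1:ℝ)] S₁ := by
    have hu := norm_curve (α/2 + π/2)
    refine le_trans ?_ (proj_lower hu (A := Icc (-Real.sin (α/2)) (Real.sin (α/2))) ?_)
    · rw [Real.volume_Icc]; apply le_of_eq; congr 1; ring
    · rw [hS₁, Set.image_image]
      have hval : ∀ θ, ⟪curve (α/2 + π/2), curve θ⟫ = Real.sin (θ - α/2) := by
        intro θ
        rw [inner_curve_curve]
        rw [show α/2 + π/2 - θ = π/2 - (θ - α/2) by ring, Real.cos_pi_div_two_sub]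
      simp only [hval]
      have := intermediate_value_Icc (f := fun θ : ℝ => Real.sin (θ - α/2)) (le_of_lt hα0)
        (Continuous.continuousOn (Real.continuous_sin.comp (continuous_id.sub continuous_const)))
      refine le_trans ?_ this
      have e1 : (fun θ : ℝ => Real.sin (θ - α/2)) 0 = -Real.sin (α/2) := by
        simp only []; rw [show (0:ℝ) - α/2 = -(α/2) by ring, Real.sin_neg]
      have e2 : (fun θ : ℝ => Real.sin (θ - α/2)) α = Real.sin (α/2) := by
        simp only []; rw [show α - α/2 = α/2 by ring]
      beta_reduce at e1 e2
      rw [e1, e2]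
  have hb2 : ENNReal.ofReal (2 * Real.sin (α/2)) ≤ μH[(1:ℝ)] S₂ := by
    have hu := norm_curve (π/2 - α/2)
    refine le_trans ?_ (proj_lower hu (A := Ico (-Real.sin (α/2)) (Real.sin (α/2))) ?_)
    · rw [Real.volume_Ico]; apply le_of_eq; congr 1; ring
    · rw [hS₂, Set.image_image]
      have hval : ∀ θ, ⟪curve (π/2 - α/2), curve θ⟫ = Real.sin (θ + α/2) := by
        intro θ
        rw [inner_curve_curve]
        rw [show π/2 - α/2 - θ = π/2 - (θ + α/2) by ring, Real.cos_pi_div_two_sub]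
      simp only [hval]
      have := intermediate_value_Ico (f := fun θ : ℝ => Real.sin (θ + α/2)) (by linarith : -α ≤ (0:ℝ))
        (Continuous.continuousOn (Real.continuous_sin.comp (continuous_id.add continuous_const)))
      refine le_trans ?_ this
      have e1 : (fun θ : ℝ => Real.sin (θ + α/2)) (-α) = -Real.sin (α/2) := by
        simp only []; rw [show -α + α/2 = -(α/2) by ring, Real.sin_neg]
      have e2 : (fun θ : ℝ => Real.sin (θ + α/2)) 0 = Real.sin (α/2) := by
        simp only []; rw [show (0:ℝ) + α/2 = α/2 by ring]
      beta_reduce at e1 e2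
      rw [e1, e2]
  calc ENNReal.ofReal (4 * Real.sin (α/2))
      = ENNReal.ofReal (2 * Real.sin (α/2)) + ENNReal.ofReal (2 * Real.sin (α/2)) := by
        rw [← ENNReal.ofReal_add (by positivity) (by positivity)]; congr 1; ring
    _ ≤ μH[(1:ℝ)] S₂ + μH[(1:ℝ)] S₁ := add_le_add hb2 hb1
    _ = μH[(1:ℝ)] (S₂ ∪ S₁) := (measure_union hdisj hmeas).symm
    _ ≤ μH[(1:ℝ)] (arc (curve 0) α) := measure_mono hsub

lemma rot_on (q : E2) (hq : ‖q‖ = 1) : Orthonormal ℝ ![q, vec2 (-(q 1)) (q 0)] := by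
  have hsq : q 0 ^ 2 + q 1 ^ 2 = 1 := by rw [normsq_eq, hq]; norm_num
  rw [orthonormal_iff_ite]
  intro i j
  fin_cases i <;> fin_cases j <;>
    simp [inner_eq, vec2_apply0, vec2_apply1, -inner_self_eq_norm_sq_to_K] <;> nlinarith

def rotB (q : E2) (hq : ‖q‖ = 1) : OrthonormalBasis (Fin 2) ℝ E2 :=
  OrthonormalBasis.mk (rot_on q hq)
    (ge_of_eq ((rot_on q hq).linearIndependent.span_eq_top_of_card_eq_finrank
      (by simp [finrank_euclideanSpace_fin])))

example : True := trivial

lemma rotB_repr_apply (q : E2) (hq : ‖q‖ = 1) (p : E2) :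
    (rotB q hq).repr p 0 = ⟪q, p⟫ := by
  rw [OrthonormalBasis.repr_apply_apply]
  congr 1
  show (rotB q hq) 0 = q
  rw [rotB, OrthonormalBasis.coe_mk]
  simp

lemma e0_eq : curve 0 = vec2 1 0 := by simp [curve]

lemma arc_e0 (α : ℝ) : arc (curve 0) α = {p : E2 | ‖p‖ = 1 ∧ Real.cos α ≤ p 0} := by
  ext p
  simp only [arc, e0_eq, Set.mem_setOf_eq, inner_eq]
  constructor <;> rintro ⟨h1, h2⟩ <;> refine ⟨h1, ?_⟩ <;>
    simp only [vec2_apply0, vec2_apply1] at h2 ⊢ <;> linarith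

lemma arc_preimage (q : E2) (hq : ‖q‖ = 1) (α : ℝ) :
    arc q α = (rotB q hq).repr ⁻¹' (arc (curve 0) α) := by
  ext p
  rw [arc_e0]
  simp only [arc, Set.mem_setOf_eq, Set.mem_preimage]
  rw [rotB_repr_apply, LinearIsometryEquiv.norm_map]

lemma arc_measure_eq (q : E2) (hq : ‖q‖ = 1) (α : ℝ) :
    μH[(1:ℝ)] (arc q α) = μH[(1:ℝ)] (arc (curve 0) α) := by
  rw [arc_preimage q hq α]
  have hiso : Isometry ((rotB q hq).repr.symm : E2 → E2) :=
    (rotB q hq).repr.symm.isometry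
  have himg : (rotB q hq).repr ⁻¹' (arc (curve 0) α)
      = (rotB q hq).repr.symm '' (arc (curve 0) α) := by
    ext p
    simp only [Set.mem_preimage, Set.mem_image]
    constructor
    · intro h
      exact ⟨(rotB q hq).repr p, h, by simp⟩
    · rintro ⟨v, hv, rfl⟩
      simpa using hv
  rw [himg]
  exact hiso.hausdorffMeasure_image (Or.inl zero_le_one) _

def box (α : ℝ) : Set E2 :=
  {v : E2 | v 0 ∈ Icc (Real.cos α) 1 ∧ v 1 ∈ Icc (-Real.sin α) (Real.sin α)}

lemma convex_box (α : ℝ) : Convex ℝ (box α) := by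
  rintro x ⟨hx0, hx1⟩ y ⟨hy0, hy1⟩ a b ha hb hab
  have e0 : (a • x + b • y : E2) 0 = a * x 0 + b * y 0 := rfl
  have e1 : (a • x + b • y : E2) 1 = a * x 1 + b * y 1 := rfl
  constructor
  · rw [Set.mem_Icc] at hx0 hy0 ⊢
    rw [e0]
    constructor <;> nlinarith [hx0.1, hx0.2, hy0.1, hy0.2]
  · rw [Set.mem_Icc] at hx1 hy1 ⊢
    rw [e1]
    constructor <;> nlinarith [hx1.1, hx1.2, hy1.1, hy1.2]

lemma measurable_box (α : ℝ) : MeasurableSet (box α) := by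
  have h0 : Continuous fun v : E2 => v 0 := (EuclideanSpace.proj (0 : Fin 2)).continuous
  have h1 : Continuous fun v : E2 => v 1 := (EuclideanSpace.proj (1 : Fin 2)).continuous
  exact ((measurableSet_Icc.preimage h0.measurable).inter
    (measurableSet_Icc.preimage h1.measurable))

lemma volume_box (α : ℝ) :
    volume (box α) = ENNReal.ofReal (1 - Real.cos α) * ENNReal.ofReal (2 * Real.sin α) := by
  have hmp := EuclideanSpace.volume_preserving_symm_measurableEquiv_toLp (Fin 2)
  have hbox : box α = (MeasurableEquiv.toLp 2 (Fin 2 → ℝ)).symm ⁻¹'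
      (Set.univ.pi ![Icc (Real.cos α) 1, Icc (-Real.sin α) (Real.sin α)]) := by
    ext v
    simp only [box, Set.mem_preimage, Set.mem_pi, Set.mem_univ, forall_true_left,
      Fin.forall_fin_two, Set.mem_setOf_eq]
    rfl
  rw [hbox, hmp.measure_preimage]
  · rw [MeasureTheory.volume_pi_pi]
    rw [Fin.prod_univ_two]
    simp only [Matrix.cons_val_zero, Matrix.cons_val_one, Matrix.head_cons]
    rw [Real.volume_Icc, Real.volume_Icc]
    have : (1:ℝ) - Real.cos α = 1 - Real.cos α := rfl
    congr 1
    congr 1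
    ring
  · exact (MeasurableSet.univ_pi (fun i => by fin_cases i <;> exact measurableSet_Icc)).nullMeasurableSet

lemma hull_vol {q : E2} (hq : ‖q‖ = 1) {α t : ℝ} (hα0 : 0 ≤ α) (hα : α ≤ π/2)
    (ht : α^3 ≤ t) (ht0 : 0 ≤ t) (ξ : Fin 3 → E2) (hξ : ∀ i, ξ i ∈ arc q α) :
    (volume (convexHull ℝ (Set.range ξ))).toReal ≤ t := by
  have hcos : (0:ℝ) ≤ Real.cos α := Real.cos_nonneg_of_mem_Icc ⟨by linarith, hα⟩
  have hsin : (0:ℝ) ≤ Real.sin α := Real.sin_nonneg_of_nonneg_of_le_pi hα0 (by nlinarith [Real.pi_pos])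
  set R := (rotB q hq).repr with hR
  set B := R ⁻¹' (box α) with hB
  have hconv : Convex ℝ B := (convex_box α).linear_preimage (R : E2 →ₗ[ℝ] E2)
  have hmem : Set.range ξ ⊆ B := by
    rintro p ⟨i, rfl⟩
    obtain ⟨hn, hin⟩ := hξ i
    have h0 : R (ξ i) 0 = ⟪q, ξ i⟫ := rotB_repr_apply q hq (ξ i)
    have hnv : (R (ξ i)) 0 ^ 2 + (R (ξ i)) 1 ^ 2 = 1 := by
      rw [normsq_eq, LinearIsometryEquiv.norm_map, hn]; norm_num
    have hup : ⟪q, ξ i⟫ ≤ 1 := by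
      have := real_inner_le_norm q (ξ i)
      rwa [hq, hn, one_mul] at this
    constructor
    · exact ⟨by rw [h0]; exact hin, by rw [h0]; exact hup⟩
    · rw [Set.mem_Icc]
      have hsq : (R (ξ i)) 1 ^ 2 ≤ Real.sin α ^ 2 := by
        have hc2 : Real.cos α ^ 2 + Real.sin α ^ 2 = 1 := by
          rw [← Real.sin_sq_add_cos_sq α]; ring
        rw [h0] at hnv
        nlinarith
      constructor <;> nlinarith
  have hhull : convexHull ℝ (Set.range ξ) ⊆ B := convexHull_min hmem hconv
  have hvol : volume (convexHull ℝ (Set.range ξ)) ≤ ENNReal.ofReal t := by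
    calc volume (convexHull ℝ (Set.range ξ)) ≤ volume B := measure_mono hhull
      _ = volume (box α) := by
          rw [hB]
          exact ((rotB q hq).measurePreserving_repr).measure_preimage
            (measurable_box α).nullMeasurableSet
      _ = ENNReal.ofReal (1 - Real.cos α) * ENNReal.ofReal (2 * Real.sin α) := volume_box α
      _ ≤ ENNReal.ofReal (α^2/2) * ENNReal.ofReal (2*α) := by
          apply mul_le_mul' <;> apply ENNReal.ofReal_le_ofReal
          · nlinarith [Real.one_sub_sq_div_two_le_cos (x := α)]
          · nlinarith [Real.sin_le hα0]
      _ = ENNReal.ofReal (α^2/2 * (2*α)) := (ENNReal.ofReal_mul (by positivity)).symm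
      _ ≤ ENNReal.ofReal t := by
          apply ENNReal.ofReal_le_ofReal; nlinarith
  exact ENNReal.toReal_le_of_le_ofReal ht0 hvol

lemma cube_rpow {y : ℝ} (hy : 0 ≤ y) : (y ^ ((1:ℝ)/3)) ^ (3:ℕ) = y := by
  rw [← Real.rpow_natCast (y ^ ((1:ℝ)/3)) 3, ← Real.rpow_mul hy]
  norm_num

lemma sq_rpow {y : ℝ} (hy : 0 ≤ y) : y ^ ((2:ℝ)/3) = (y ^ ((1:ℝ)/3)) ^ (2:ℕ) := by
  rw [← Real.rpow_natCast (y ^ ((1:ℝ)/3)) 2, ← Real.rpow_mul hy]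
  norm_num

lemma eight_rpow {y : ℝ} (hy : 0 ≤ y) : y ^ ((8:ℝ)/3) = (y ^ ((1:ℝ)/3)) ^ (8:ℕ) := by
  rw [← Real.rpow_natCast (y ^ ((1:ℝ)/3)) 8, ← Real.rpow_mul hy]
  norm_num

lemma A_bounds : 1.4645 ≤ π ^ ((1:ℝ)/3) ∧ π ^ ((1:ℝ)/3) ≤ 1.465 := by
  have hA0 : (0:ℝ) < π ^ ((1:ℝ)/3) := Real.rpow_pos_of_pos Real.pi_pos _
  have hA3 : (π ^ ((1:ℝ)/3)) ^ (3:ℕ) = π := cube_rpow Real.pi_pos.le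
  have h1 := Real.pi_gt_d6
  have h2 := Real.pi_lt_d6
  constructor
  · nlinarith [sq_nonneg (π ^ ((1:ℝ)/3) - 1.4645), sq_nonneg (π ^ ((1:ℝ)/3) + 1.4645)]
  · nlinarith [sq_nonneg (π ^ ((1:ℝ)/3) - 1.465), sq_nonneg (π ^ ((1:ℝ)/3) + 1.465)]

lemma B_bound : (2:ℝ) ^ ((1:ℝ)/3) ≤ 1.26 := by
  have hB0 : (0:ℝ) < 2 ^ ((1:ℝ)/3) := Real.rpow_pos_of_pos (by norm_num) _
  have hB3 : ((2:ℝ) ^ ((1:ℝ)/3)) ^ (3:ℕ) = 2 := cube_rpow (by norm_num)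
  nlinarith [sq_nonneg ((2:ℝ) ^ ((1:ℝ)/3) - 1.26), sq_nonneg ((2:ℝ) ^ ((1:ℝ)/3) + 1.26)]

lemma real_core (t : ℝ) (ht0 : 0 < t) (ht1 : t ≤ π) :
    (2*t) ^ ((2:ℝ)/3) / π ^ ((8:ℝ)/3)
      ≤ (4 * Real.sin (t ^ ((1:ℝ)/3) / 2) / (2*π))^2 := by
  set A := π ^ ((1:ℝ)/3) with hA
  set B := (2:ℝ) ^ ((1:ℝ)/3) with hB
  set α := t ^ ((1:ℝ)/3) with hα
  set x := α/2 with hx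
  set s := Real.sin x with hs
  have hA0 : (0:ℝ) < A := Real.rpow_pos_of_pos Real.pi_pos _
  have hB0 : (0:ℝ) < B := Real.rpow_pos_of_pos (by norm_num) _
  have hα0 : (0:ℝ) < α := Real.rpow_pos_of_pos ht0 _
  have hA3 : A ^ (3:ℕ) = π := cube_rpow Real.pi_pos.le
  have hB3 : B ^ (3:ℕ) = 2 := cube_rpow (by norm_num)
  have hαA : α ≤ A := Real.rpow_le_rpow ht0.le ht1 (by norm_num)
  obtain ⟨hAlb, hAub⟩ := A_bounds
  have hBub : B ≤ 1.26 := B_bound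
  rw [← hA] at hAlb hAub
  have hx0 : 0 < x := by positivity
  have hx1 : x ≤ 1 := by rw [hx]; nlinarith
  have hsin : x - x^3/4 < s := by nlinarith [Real.sin_gt_sub_cube hx0, pow_pos hx0 3]
  have hs0 : 0 ≤ s := Real.sin_nonneg_of_nonneg_of_le_pi hx0.le
    (by nlinarith [Real.pi_gt_d6])
  have hπ16 : π ≤ 3.15 := Real.pi_lt_d2.le
  -- key : B * x ≤ s * A
  have key : B * x ≤ s * A := by
    have hxA : x ≤ A/2 := by nlinarith
    have h1 : 1.26 ≤ A * (1 - x^2/4) := by nlinarith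
    nlinarith [mul_le_mul_of_nonneg_left hBub hx0.le]
  -- rewrite goal
  have hC : (2*t) ^ ((1:ℝ)/3) = B * α := Real.mul_rpow (by norm_num) ht0.le
  rw [sq_rpow (by positivity : (0:ℝ) ≤ 2*t), eight_rpow Real.pi_pos.le, hC, ← hA]
  rw [show π = A^(3:ℕ) from hA3.symm]
  have key2 : (B*x)^2 ≤ (s*A)^2 := by
    nlinarith [mul_self_le_mul_self (by positivity : (0:ℝ) ≤ B*x) key]
  rw [div_pow, div_le_div_iff₀ (by positivity) (by positivity)]
  have hα2x : α = 2*x := by rw [hx]; ring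
  rw [hα2x]
  nlinarith [mul_le_mul_of_nonneg_right key2 (pow_nonneg hA0.le 6), pow_pos hA0 6]

/-- The uniform probability measure on the unit circle `S¹ ⊂ ℝ²`. -/
noncomputable def sphereUniform2 : Measure (EuclideanSpace ℝ (Fin 2)) :=
  (μH[(1 : ℝ)] (sphere (0 : EuclideanSpace ℝ (Fin 2)) 1))⁻¹ •
    (μH[(1 : ℝ)]).restrict (sphere (0 : EuclideanSpace ℝ (Fin 2)) 1)

lemma arc_subset_sphere (q : E2) (α : ℝ) : arc q α ⊆ sphere (0:E2) 1 := by
  intro p hp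
  rw [mem_sphere_iff_norm, sub_zero]
  exact hp.1

lemma circle_pos : μH[(1:ℝ)] (sphere (0:E2) 1) ≠ 0 := by
  have h := arc_lower_e0 (π/2) (by positivity) le_rfl
  have h2 : (0:ℝ≥0∞) < ENNReal.ofReal (4 * Real.sin (π/2/2)) := by
    rw [show π/2/2 = π/4 by ring]
    have := Real.sin_pi_div_four
    rw [this]
    have : (0:ℝ) < 4 * (Real.sqrt 2 / 2) := by positivity
    exact ENNReal.ofReal_pos.mpr this
  have h3 := lt_of_lt_of_le h2 h
  have h4 := lt_of_lt_of_le h3 (measure_mono (arc_subset_sphere (curve 0) (π/2)))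
  exact ne_of_gt h4

lemma circle_ne_top : μH[(1:ℝ)] (sphere (0:E2) 1) ≠ ⊤ :=
  ne_top_of_le_ne_top ENNReal.ofReal_ne_top circle_measure_le

instance : IsProbabilityMeasure sphereUniform2 := by
  constructor
  rw [sphereUniform2, Measure.smul_apply, Measure.restrict_apply_univ, smul_eq_mul]
  exact ENNReal.inv_mul_cancel circle_pos circle_ne_top

lemma arc_prob (q : E2) (hq : ‖q‖ = 1) (α : ℝ) (hα0 : 0 < α) (hα : α ≤ π/2) :
    ENNReal.ofReal (4 * Real.sin (α/2)) / ENNReal.ofReal (2*π) ≤ sphereUniform2 (arc q α) := by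
  rw [sphereUniform2, Measure.smul_apply, smul_eq_mul,
    Measure.restrict_apply (isClosed_arc q α).measurableSet,
    Set.inter_eq_self_of_subset_left (arc_subset_sphere q α),
    arc_measure_eq q hq α]
  rw [ENNReal.div_eq_inv_mul]
  exact mul_le_mul' (ENNReal.inv_le_inv.mpr circle_measure_le) (arc_lower_e0 α hα0 hα)

lemma event_measure (α : ℝ) (hα0 : 0 < α) (hα : α ≤ π/2) :
    (ENNReal.ofReal (4 * Real.sin (α/2)) / ENNReal.ofReal (2*π))^2 ≤
      Measure.pi (fun _ : Fin 3 => sphereUniform2)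
        {ξ : Fin 3 → E2 | ‖ξ 0‖ = 1 ∧ ξ 1 ∈ arc (ξ 0) α ∧ ξ 2 ∈ arc (ξ 0) α} := by
  set r := ENNReal.ofReal (4 * Real.sin (α/2)) / ENNReal.ofReal (2*π) with hr
  set S : Set (E2 × (Fin 2 → E2)) := {x | ‖x.1‖ = 1 ∧ ∀ j, x.2 j ∈ arc x.1 α} with hS
  have hSclosed : IsClosed S := by
    have h1 : IsClosed {x : E2 × (Fin 2 → E2) | ‖x.1‖ = 1} :=
      isClosed_eq (continuous_norm.comp continuous_fst) continuous_const
    have h2 : ∀ j : Fin 2, IsClosed {x : E2 × (Fin 2 → E2) | x.2 j ∈ arc x.1 α} := by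
      intro j
      have hc1 : IsClosed {x : E2 × (Fin 2 → E2) | ‖x.2 j‖ = 1} :=
        isClosed_eq (continuous_norm.comp ((continuous_apply j).comp continuous_snd)) continuous_const
      have hc2 : IsClosed {x : E2 × (Fin 2 → E2) | Real.cos α ≤ ⟪x.1, x.2 j⟫} := by
        apply isClosed_le continuous_const
        exact Continuous.inner continuous_fst ((continuous_apply j).comp continuous_snd)
      exact hc1.inter hc2
    have : S = {x : E2 × (Fin 2 → E2) | ‖x.1‖ = 1} ∩ ⋂ j, {x | x.2 j ∈ arc x.1 α} := by
      ext x; simp [hS, Set.mem_iInter]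
    rw [this]
    exact h1.inter (isClosed_iInter h2)
  have hSm : MeasurableSet S := hSclosed.measurableSet
  have hE : {ξ : Fin 3 → E2 | ‖ξ 0‖ = 1 ∧ ξ 1 ∈ arc (ξ 0) α ∧ ξ 2 ∈ arc (ξ 0) α}
      = (MeasurableEquiv.piFinSuccAbove (fun _ : Fin 3 => E2) 0) ⁻¹' S := by
    ext ξ
    simp only [Set.mem_preimage, MeasurableEquiv.piFinSuccAbove_apply, hS,
      Set.mem_setOf_eq, Fin.forall_fin_two]
    rfl
  rw [hE, (measurePreserving_piFinSuccAbove (fun _ : Fin 3 => sphereUniform2) 0).measure_preimage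
    hSm.nullMeasurableSet]
  rw [Measure.prod_apply hSm]
  have hae : ∀ᵐ a ∂sphereUniform2, a ∈ sphere (0:E2) 1 := by
    rw [sphereUniform2]
    exact Measure.ae_smul_measure (ae_restrict_mem isClosed_sphere.measurableSet) _
  have hbound : ∀ᵐ a ∂sphereUniform2,
      r^2 ≤ Measure.pi (fun _ : Fin 2 => sphereUniform2) (Prod.mk a ⁻¹' S) := by
    filter_upwards [hae] with a ha
    rw [mem_sphere_iff_norm, sub_zero] at ha
    have hslice : Prod.mk a ⁻¹' S = Set.univ.pi (fun _ : Fin 2 => arc a α) := by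
      ext y
      simp [hS, Set.mem_pi, ha]
    rw [hslice, Measure.pi_pi]
    rw [Finset.prod_const, Finset.card_univ, Fintype.card_fin]
    exact pow_le_pow_left' (arc_prob a ha α hα0 hα) 2
  calc r^2 = r^2 * sphereUniform2 Set.univ := by rw [measure_univ, mul_one]
    _ = ∫⁻ _, r^2 ∂sphereUniform2 := (lintegral_const _).symm
    _ ≤ ∫⁻ a, Measure.pi (fun _ : Fin 2 => sphereUniform2) (Prod.mk a ⁻¹' S) ∂sphereUniform2 :=
        lintegral_mono_ae hbound


theorem triangle_area_cdf_lower (t : ℝ) (ht0 : 0 ≤ t) (ht1 : t ≤ π) :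
    ENNReal.ofReal ((2 * t) ^ ((2 : ℝ) / 3) / π ^ ((8 : ℝ) / 3)) ≤
      (Measure.pi fun _ : Fin 3 => sphereUniform2)
        {ξ | (volume (convexHull ℝ (Set.range ξ))).toReal ≤ t} := by
  rcases eq_or_lt_of_le ht0 with h0 | ht0'
  · rw [← h0, mul_zero, Real.zero_rpow (by norm_num), zero_div, ENNReal.ofReal_zero]
    exact zero_le
  · set α := t ^ ((1:ℝ)/3) with hαdef
    have hα0 : 0 < α := Real.rpow_pos_of_pos ht0' _
    have hα3 : α ^ (3:ℕ) = t := cube_rpow ht0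
    have hαA : α ≤ π ^ ((1:ℝ)/3) := Real.rpow_le_rpow ht0 ht1 (by norm_num)
    have hαhalf : α ≤ π/2 := by
      have h1 := A_bounds.2
      have h2 := Real.pi_gt_d6
      linarith
    have hsub : {ξ : Fin 3 → E2 | ‖ξ 0‖ = 1 ∧ ξ 1 ∈ arc (ξ 0) α ∧ ξ 2 ∈ arc (ξ 0) α}
        ⊆ {ξ : Fin 3 → E2 | (volume (convexHull ℝ (Set.range ξ))).toReal ≤ t} := by
      rintro ξ ⟨hn, h1, h2⟩
      refine hull_vol hn hα0.le hαhalf (le_of_eq hα3) ht0 ξ ?_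
      intro i
      fin_cases i
      · show ξ 0 ∈ arc (ξ 0) α
        refine ⟨hn, ?_⟩
        rw [real_inner_self_eq_norm_sq, hn]
        simpa using Real.cos_le_one α
      · exact h1
      · exact h2
    refine le_trans ?_ (le_trans (event_measure α hα0 hαhalf) (measure_mono hsub))
    have hs0 : (0:ℝ) ≤ Real.sin (α/2) := by
      apply Real.sin_nonneg_of_nonneg_of_le_pi (by positivity)
      have := Real.pi_gt_d6
      have := A_bounds.2
      linarith
    calc ENNReal.ofReal ((2 * t) ^ ((2 : ℝ) / 3) / π ^ ((8 : ℝ) / 3))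
        ≤ ENNReal.ofReal ((4 * Real.sin (α/2) / (2*π))^2) :=
          ENNReal.ofReal_le_ofReal (real_core t ht0' ht1)
      _ = (ENNReal.ofReal (4 * Real.sin (α/2) / (2*π)))^2 :=
          ENNReal.ofReal_pow (by positivity) 2
      _ = (ENNReal.ofReal (4 * Real.sin (α/2)) / ENNReal.ofReal (2*π))^2 := by
          rw [ENNReal.ofReal_div_of_pos Real.two_pi_pos]

end
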